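/- Let f be a bi-univalent function of the class K_σ(φ), i.e. f is bi-univalent with inverse extension F and both 1 + zf''(z)/f'(z) ≺ φ(z) and 1 + wF''(w)/F'(w) ≺ φ(w). Then the third Taylor coefficient of f satisfies |a₃| ≤ min{ (B₁² + B₁ + |B₂ − B₁|)/6, B₁(3B₁ + 2)/12 }. -/

import Mathlib

/-!
Let `ω` and `ϖ` be the Schwarz functions of the two subordinations, with `c = ω'(0)`,
`γ = ω''(0)`, `d = ϖ'(0)`, `δ = ϖ''(0)`. Comparing derivatives at `0` gives
`f''(0) = B₁ c` and `2 (f'''(0) - f''(0)²) = 2 B₂ c² + B₁ γ`, and likewise for `F`, whose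
derivatives at `0` are `F'' = -f''` and `F''' = 3 f''² - f'''`; hence `d = -c`.
Schwarz–Pick applied to `ω(z)/z` gives `|γ| ≤ 2 (1 - |c|²)`, so `|c² + γ/2| ≤ 1`, and
`f''' = B₁² c² + (B₂ - B₁) c² + B₁ (c² + γ/2)` yields the first bound. Subtracting the two
identities gives `4 f''' = 6 B₁² c² + B₁ (γ - δ)`, which yields the second.
-/

open Metric Set Complex

noncomputable section

/-- `g` is subordinate to `h` on the unit disk: there is an analytic `ω : 𝔻 → 𝔻`
with `ω 0 = 0` such that `g = h ∘ ω` on `𝔻`. -/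
def Subordinate (g h : ℂ → ℂ) : Prop :=
  ∃ ω : ℂ → ℂ, DifferentiableOn ℂ ω (ball 0 1) ∧ ω 0 = 0 ∧
    (∀ z ∈ ball (0 : ℂ) 1, ω z ∈ ball (0 : ℂ) 1) ∧
    ∀ z ∈ ball (0 : ℂ) 1, g z = h (ω z)

open Filter Topology ComplexConjugate

section

variable {𝕜 : Type*} [NontriviallyNormedField 𝕜]

theorem deriv_id_mul_at_zero {r : 𝕜 → 𝕜} (hr : DifferentiableAt 𝕜 r 0) :
    deriv (fun z => z * r z) 0 = r 0 := by
  simpa using ((hasDerivAt_id' 0).fun_mul hr.hasDerivAt).deriv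

variable [CompleteSpace 𝕜]

theorem deriv_deriv_id_mul_at_zero {r : 𝕜 → 𝕜} (hr : AnalyticAt 𝕜 r 0) :
    deriv (deriv fun z => z * r z) 0 = 2 * deriv r 0 := by
  have hderiv : deriv (fun z => z * r z) =ᶠ[𝓝 0] fun z => r z + z * deriv r z := by
    filter_upwards [hr.eventually_analyticAt] with z hz
    simpa using ((hasDerivAt_id' z).fun_mul hz.differentiableAt.hasDerivAt).deriv
  rw [hderiv.deriv_eq, (hr.differentiableAt.hasDerivAt.fun_add
      ((hasDerivAt_id' 0).fun_mul hr.deriv.differentiableAt.hasDerivAt)).deriv]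
  ring

variable {φ ω : 𝕜 → 𝕜} {z : 𝕜}

theorem deriv_comp_eventuallyEq (hφ : AnalyticAt 𝕜 φ (ω z)) (hω : AnalyticAt 𝕜 ω z) :
    deriv (φ ∘ ω) =ᶠ[𝓝 z] fun w => deriv φ (ω w) * deriv ω w := by
  filter_upwards [hω.eventually_analyticAt,
    hω.continuousAt.eventually hφ.eventually_analyticAt] with w hωw hφw
  exact deriv_comp w hφw.differentiableAt hωw.differentiableAt

theorem deriv_deriv_comp (hφ : AnalyticAt 𝕜 φ (ω z)) (hω : AnalyticAt 𝕜 ω z) :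
    deriv (deriv (φ ∘ ω)) z =
      deriv (deriv φ) (ω z) * deriv ω z ^ 2 + deriv φ (ω z) * deriv (deriv ω) z := by
  rw [(deriv_comp_eventuallyEq hφ hω).deriv_eq]
  refine (((hφ.deriv.differentiableAt.hasDerivAt.comp z hω.differentiableAt.hasDerivAt).fun_mul
    hω.deriv.differentiableAt.hasDerivAt).deriv).trans ?_
  simp only [Function.comp_apply]
  ring

theorem deriv_deriv_deriv_comp (hφ : AnalyticAt 𝕜 φ (ω z)) (hω : AnalyticAt 𝕜 ω z) :
    deriv (deriv (deriv (φ ∘ ω))) z =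
      deriv (deriv (deriv φ)) (ω z) * deriv ω z ^ 3
        + 3 * deriv (deriv φ) (ω z) * deriv ω z * deriv (deriv ω) z
        + deriv φ (ω z) * deriv (deriv (deriv ω)) z := by
  have hsecond : deriv (deriv (φ ∘ ω)) =ᶠ[𝓝 z] fun w =>
      deriv (deriv φ) (ω w) * deriv ω w ^ 2 + deriv φ (ω w) * deriv (deriv ω) w := by
    filter_upwards [hω.eventually_analyticAt,
      hω.continuousAt.eventually hφ.eventually_analyticAt] with w hωw hφw
    exact deriv_deriv_comp hφw hωw
  have hω' := hω.differentiableAt.hasDerivAt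
  have hω'' := hω.deriv.differentiableAt.hasDerivAt
  have hω''' := hω.deriv.deriv.differentiableAt.hasDerivAt
  have hφ' := hφ.deriv.differentiableAt.hasDerivAt.comp z hω'
  have hφ'' := hφ.deriv.deriv.differentiableAt.hasDerivAt.comp z hω'
  rw [hsecond.deriv_eq]
  refine (((hφ''.fun_mul (hω''.fun_pow 2)).fun_add (hφ'.fun_mul hω''')).deriv).trans ?_
  simp only [Function.comp_apply, Nat.cast_ofNat]
  ring

theorem deriv_inverse_of_comp_eventuallyEq_id {f F : 𝕜 → 𝕜} {x : 𝕜}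
    (hF : AnalyticAt 𝕜 F (f x)) (hf : AnalyticAt 𝕜 f x) (hf1 : deriv f x = 1)
    (hFf : F ∘ f =ᶠ[𝓝 x] id) :
    deriv F (f x) = 1 ∧ deriv (deriv F) (f x) = -deriv (deriv f) x ∧
      deriv (deriv (deriv F)) (f x) = 3 * deriv (deriv f) x ^ 2 - deriv (deriv (deriv f)) x := by
  have h1 := hFf.deriv_eq
  have h2 := hFf.deriv.deriv_eq
  have h3 := hFf.deriv.deriv.deriv_eq
  rw [deriv_comp x hF.differentiableAt hf.differentiableAt, deriv_id, hf1] at h1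
  rw [deriv_deriv_comp hF hf, deriv_id', deriv_const', hf1] at h2
  rw [deriv_deriv_deriv_comp hF hf, deriv_id', deriv_const', deriv_const', hf1] at h3
  refine ⟨by simpa using h1, by linear_combination h2 - deriv (deriv f) x * h1, ?_⟩
  linear_combination h3 - 3 * deriv (deriv f) x * h2
    + (3 * deriv (deriv f) x ^ 2 - deriv (deriv (deriv f)) x) * h1

theorem taylor_coeffs_of_eventuallyEq_comp {u φ ω : 𝕜 → 𝕜} (hu : AnalyticAt 𝕜 u 0)
    (hu1 : deriv u 0 = 1) (hφ : AnalyticAt 𝕜 φ 0) (hω : AnalyticAt 𝕜 ω 0) (hω0 : ω 0 = 0)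
    (h : (fun z => 1 + z * deriv (deriv u) z / deriv u z) =ᶠ[𝓝 0] φ ∘ ω) :
    deriv (deriv u) 0 = deriv φ 0 * deriv ω 0 ∧
      2 * (deriv (deriv (deriv u)) 0 - deriv (deriv u) 0 ^ 2) =
        deriv (deriv φ) 0 * deriv ω 0 ^ 2 + deriv φ 0 * deriv (deriv ω) 0 := by
  have hu'0 : deriv u 0 ≠ 0 := by rw [hu1]; exact one_ne_zero
  set r : 𝕜 → 𝕜 := fun z => deriv (deriv u) z / deriv u z
  have hr : AnalyticAt 𝕜 r 0 := hu.deriv.deriv.div hu.deriv hu'0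
  have hr' : deriv r 0 = deriv (deriv (deriv u)) 0 - deriv (deriv u) 0 ^ 2 := by
    refine (hu.deriv.deriv.differentiableAt.hasDerivAt.div
      hu.deriv.differentiableAt.hasDerivAt hu'0).deriv.trans ?_
    rw [hu1]
    ring
  have hφω : AnalyticAt 𝕜 φ (ω 0) := by rwa [hω0]
  simp only [mul_div_assoc] at h
  constructor
  · have h1 := h.deriv_eq
    rw [deriv_const_add', deriv_id_mul_at_zero hr.differentiableAt,
      deriv_comp 0 hφω.differentiableAt hω.differentiableAt, hω0] at h1
    simpa [r, hu1] using h1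
  · have h2 := h.deriv.deriv_eq
    rw [deriv_const_add', deriv_deriv_id_mul_at_zero hr, deriv_deriv_comp hφω hω, hω0, hr'] at h2
    exact h2

end

theorem norm_sub_lt_norm_one_sub_conj_mul {c w : ℂ} (hc : ‖c‖ < 1) (hw : ‖w‖ < 1) :
    ‖w - c‖ < ‖1 - conj c * w‖ := by
  have key : ‖1 - conj c * w‖ ^ 2 - ‖w - c‖ ^ 2 = (1 - ‖c‖ ^ 2) * (1 - ‖w‖ ^ 2) := by
    simp only [Complex.sq_norm, Complex.normSq_sub, Complex.normSq_mul, Complex.normSq_conj,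
      map_one, one_mul, Complex.mul_re, Complex.conj_re, Complex.conj_im]
    ring
  have hpos : 0 < (1 - ‖c‖ ^ 2) * (1 - ‖w‖ ^ 2) := by
    apply mul_pos <;> nlinarith [norm_nonneg c, norm_nonneg w]
  exact lt_of_pow_lt_pow_left₀ 2 (norm_nonneg _) (by linarith)

theorem norm_deriv_le_one_sub_sq_of_mapsTo_ball {ψ : ℂ → ℂ}
    (hd : DifferentiableOn ℂ ψ (ball 0 1)) (hmaps : MapsTo ψ (ball 0 1) (ball 0 1)) :
    ‖deriv ψ 0‖ ≤ 1 - ‖ψ 0‖ ^ 2 := by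
  set c := ψ 0
  have hc : ‖c‖ < 1 := mem_ball_zero_iff.mp (hmaps (mem_ball_self one_pos))
  have hden : ∀ z ∈ ball (0 : ℂ) 1, 1 - conj c * ψ z ≠ 0 := fun z hz =>
    norm_pos_iff.mp ((norm_nonneg _).trans_lt
      (norm_sub_lt_norm_one_sub_conj_mul hc (mem_ball_zero_iff.mp (hmaps hz))))
  -- the disc automorphism moving `c` to `0`, composed with `ψ`, is a Schwarz function
  set B : ℂ → ℂ := fun z => (ψ z - c) / (1 - conj c * ψ z)
  have hBd : DifferentiableOn ℂ B (ball 0 1) :=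
    (hd.sub_const c).div ((hd.const_mul _).const_sub 1) hden
  have hBmaps : MapsTo B (ball 0 1) (closedBall (B 0) 1) := by
    intro z hz
    have hz' := norm_sub_lt_norm_one_sub_conj_mul hc (mem_ball_zero_iff.mp (hmaps hz))
    simp only [B, c, sub_self, zero_div, mem_closedBall_zero_iff, norm_div]
    exact (div_lt_one ((norm_nonneg _).trans_lt hz')).mpr hz' |>.le
  have h1c : (1 : ℂ) - conj c * c = ((1 - ‖c‖ ^ 2 : ℝ) : ℂ) := by
    rw [Complex.conj_mul']; push_cast; ring
  have hpos : 0 < 1 - ‖c‖ ^ 2 := by nlinarith [norm_nonneg c]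
  have hB' : deriv B 0 = deriv ψ 0 / ((1 - ‖c‖ ^ 2 : ℝ) : ℂ) := by
    have hψ := (hd.differentiableAt (isOpen_ball.mem_nhds (mem_ball_self one_pos))).hasDerivAt
    have hne := hden 0 (mem_ball_self one_pos)
    refine ((hψ.sub_const c).div ((hψ.const_mul (conj c)).const_sub 1) hne).deriv.trans ?_
    rw [← h1c, sub_self, zero_mul, sub_zero, sq]
    exact mul_div_mul_right _ _ hne
  have hschwarz := Complex.norm_deriv_le_one_of_mapsTo_ball hBd hBmaps one_pos
  rwa [hB', norm_div, Complex.norm_real, Real.norm_of_nonneg hpos.le, div_le_one hpos] at hschwarz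

theorem norm_deriv_le_one_sub_sq_of_mapsTo_closedBall {ψ : ℂ → ℂ}
    (hd : DifferentiableOn ℂ ψ (ball 0 1)) (hmaps : MapsTo ψ (ball 0 1) (closedBall 0 1)) :
    ‖deriv ψ 0‖ ≤ 1 - ‖ψ 0‖ ^ 2 := by
  by_cases hmax : ∃ z₀ ∈ ball (0 : ℂ) 1, ‖ψ z₀‖ = 1
  · obtain ⟨z₀, hz₀, hnorm⟩ := hmax
    have hconst : EqOn ψ (Function.const ℂ (ψ z₀)) (ball 0 1) :=
      Complex.eqOn_of_isPreconnected_of_isMaxOn_norm (convex_ball 0 1).isPreconnected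
        isOpen_ball hd hz₀ fun z hz => by simpa [hnorm] using hmaps hz
    have h0 : (0 : ℂ) ∈ ball 0 1 := mem_ball_self one_pos
    have hderiv : deriv (Function.const ℂ (ψ z₀)) 0 = 0 := deriv_const 0 _
    rw [(eventuallyEq_of_mem (isOpen_ball.mem_nhds h0) hconst).deriv_eq, hconst h0, hderiv,
      Function.const_apply, hnorm]
    norm_num
  · push Not at hmax
    exact norm_deriv_le_one_sub_sq_of_mapsTo_ball hd fun z hz =>
      mem_ball_zero_iff.mpr ((mem_closedBall_zero_iff.mp (hmaps hz)).lt_of_ne (hmax z hz))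

theorem norm_deriv_deriv_le_of_mapsTo_ball {ω : ℂ → ℂ} (hd : DifferentiableOn ℂ ω (ball 0 1))
    (h0 : ω 0 = 0) (hmaps : MapsTo ω (ball 0 1) (ball 0 1)) :
    ‖deriv (deriv ω) 0‖ ≤ 2 * (1 - ‖deriv ω 0‖ ^ 2) := by
  have hball : ball (0 : ℂ) 1 ∈ 𝓝 0 := isOpen_ball.mem_nhds (mem_ball_self one_pos)
  set ψ := dslope ω 0
  have hψd : DifferentiableOn ℂ ψ (ball 0 1) := (differentiableOn_dslope hball).mpr hd
  have hmaps' : MapsTo ω (ball 0 1) (closedBall (ω 0) 1) := by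
    rw [h0]; exact hmaps.mono_right ball_subset_closedBall
  have hψmaps : MapsTo ψ (ball 0 1) (closedBall 0 1) := fun z hz => by
    simpa using Complex.norm_dslope_le_div_of_mapsTo_ball hd hmaps' hz
  have hω : ω = fun z => z * ψ z := by
    funext z
    simpa [h0] using (sub_smul_dslope ω 0 z).symm
  have hω'' : deriv (deriv ω) 0 = 2 * deriv ψ 0 := by
    rw [hω, deriv_deriv_id_mul_at_zero (hψd.analyticAt hball)]
  rw [hω'', norm_mul, Complex.norm_two, ← dslope_same ω 0]
  linarith [norm_deriv_le_one_sub_sq_of_mapsTo_closedBall hψd hψmaps]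

theorem Subordinate.exists_taylor_coeffs {u φ : ℂ → ℂ} (hu : DifferentiableOn ℂ u (ball 0 1))
    (hu1 : deriv u 0 = 1) (hφ : DifferentiableOn ℂ φ (ball 0 1))
    (h : Subordinate (fun z => 1 + z * deriv (deriv u) z / deriv u z) φ) :
    ∃ c γ : ℂ, ‖γ‖ ≤ 2 * (1 - ‖c‖ ^ 2) ∧ deriv (deriv u) 0 = deriv φ 0 * c ∧
      2 * (deriv (deriv (deriv u)) 0 - deriv (deriv u) 0 ^ 2) =
        deriv (deriv φ) 0 * c ^ 2 + deriv φ 0 * γ := by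
  obtain ⟨ω, hωd, hω0, hωmaps, heq⟩ := h
  have hball : ball (0 : ℂ) 1 ∈ 𝓝 0 := isOpen_ball.mem_nhds (mem_ball_self one_pos)
  exact ⟨deriv ω 0, deriv (deriv ω) 0, norm_deriv_deriv_le_of_mapsTo_ball hωd hω0 hωmaps,
    taylor_coeffs_of_eventuallyEq_comp (hu.analyticAt hball) hu1 (hφ.analyticAt hball)
      (hωd.analyticAt hball) hω0 (eventuallyEq_of_mem hball heq)⟩

theorem norm_le_of_two_mul_eq {B₁ B₂ : ℝ} (hB₁ : 0 ≤ B₁) {p c γ : ℂ}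
    (hγ : ‖γ‖ ≤ 2 * (1 - ‖c‖ ^ 2)) (hp : 2 * p = 2 * (B₁ ^ 2 + B₂) * c ^ 2 + B₁ * γ) :
    ‖p‖ ≤ B₁ ^ 2 + B₁ + |B₂ - B₁| := by
  have hc : ‖c‖ ^ 2 ≤ 1 := by nlinarith [norm_nonneg γ]
  have hsplit : p = B₁ ^ 2 * c ^ 2 + (B₂ - B₁ : ℝ) * c ^ 2 + B₁ * (c ^ 2 + γ / 2) := by
    push_cast
    linear_combination hp / 2
  have hmix : ‖c ^ 2 + γ / 2‖ ≤ 1 := by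
    calc ‖c ^ 2 + γ / 2‖ ≤ ‖c ^ 2‖ + ‖γ / 2‖ := norm_add_le _ _
      _ = ‖c‖ ^ 2 + ‖γ‖ / 2 := by rw [norm_pow, norm_div, Complex.norm_two]
      _ ≤ 1 := by linarith
  rw [hsplit]
  calc _ ≤ ‖(B₁ : ℂ) ^ 2 * c ^ 2‖ + ‖((B₂ - B₁ : ℝ) : ℂ) * c ^ 2‖ + ‖(B₁ : ℂ) * (c ^ 2 + γ / 2)‖ :=
        norm_add₃_le
    _ = B₁ ^ 2 * ‖c‖ ^ 2 + |B₂ - B₁| * ‖c‖ ^ 2 + B₁ * ‖c ^ 2 + γ / 2‖ := by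
        simp only [norm_mul, norm_pow, Complex.norm_real, Real.norm_eq_abs, abs_of_nonneg hB₁]
    _ ≤ B₁ ^ 2 * 1 + |B₂ - B₁| * 1 + B₁ * 1 := by gcongr
    _ = B₁ ^ 2 + B₁ + |B₂ - B₁| := by ring

theorem norm_le_of_four_mul_eq {B₁ : ℝ} (hB₁ : 0 ≤ B₁) {p c γ δ : ℂ}
    (hγ : ‖γ‖ ≤ 2 * (1 - ‖c‖ ^ 2)) (hδ : ‖δ‖ ≤ 2 * (1 - ‖c‖ ^ 2))
    (hp : 4 * p = 6 * B₁ ^ 2 * c ^ 2 + B₁ * (γ - δ)) :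
    ‖p‖ ≤ 3 / 2 * B₁ ^ 2 + B₁ := by
  have hc : ‖c‖ ^ 2 ≤ 1 := by nlinarith [norm_nonneg γ]
  have h4p : 4 * ‖p‖ ≤ 6 * B₁ ^ 2 * ‖c‖ ^ 2 + B₁ * (‖γ‖ + ‖δ‖) := by
    calc 4 * ‖p‖ = ‖6 * (B₁ : ℂ) ^ 2 * c ^ 2 + B₁ * (γ - δ)‖ := by
          rw [← hp, norm_mul, Complex.norm_ofNat]
      _ ≤ ‖6 * (B₁ : ℂ) ^ 2 * c ^ 2‖ + ‖(B₁ : ℂ) * (γ - δ)‖ := norm_add_le _ _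
      _ ≤ 6 * B₁ ^ 2 * ‖c‖ ^ 2 + B₁ * (‖γ‖ + ‖δ‖) := by
          simp only [norm_mul, norm_pow, Complex.norm_real, Real.norm_eq_abs, abs_of_nonneg hB₁,
            Complex.norm_ofNat]
          gcongr
          exact norm_sub_le γ δ
  nlinarith

theorem stmt9_general
    (f F : ℂ → ℂ)
    (hf : DifferentiableOn ℂ f (ball 0 1)) (hf0 : f 0 = 0) (hf1 : deriv f 0 = 1)
    (hF : DifferentiableOn ℂ F (ball 0 1))
    (hFf : ∀ᶠ z in nhds (0 : ℂ), F (f z) = z)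
    (φ : ℂ → ℂ) (B₁ B₂ : ℝ)
    (hφ : DifferentiableOn ℂ φ (ball 0 1))
    (hB₁ : 0 < B₁) (hφ1 : deriv φ 0 = (B₁ : ℂ)) (hφ2 : iteratedDeriv 2 φ 0 = 2 * (B₂ : ℂ))
    (hfsub : Subordinate (fun z => 1 + z * deriv (deriv f) z / deriv f z) φ)
    (hFsub : Subordinate (fun w => 1 + w * deriv (deriv F) w / deriv F w) φ) :
    ‖iteratedDeriv 3 f 0 / 6‖ ≤ min ((B₁ ^ 2 + B₁ + |B₂ - B₁|) / 6) (B₁ * (3 * B₁ + 2) / 12) := by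
  have hball : ball (0 : ℂ) 1 ∈ 𝓝 0 := isOpen_ball.mem_nhds (mem_ball_self one_pos)
  simp only [iteratedDeriv_succ, iteratedDeriv_zero] at hφ2 ⊢
  obtain ⟨c, γ, hγ, hf2, hf3⟩ := hfsub.exists_taylor_coeffs hf hf1 hφ
  obtain ⟨hF1, hF2, hF3⟩ := deriv_inverse_of_comp_eventuallyEq_id
    (by rw [hf0]; exact hF.analyticAt hball) (hf.analyticAt hball) hf1 hFf
  rw [hf0] at hF1 hF2 hF3
  obtain ⟨d, δ, hδ, hF2', hF3'⟩ := hFsub.exists_taylor_coeffs hF hF1 hφ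
  simp only [hφ1, hφ2] at hf2 hf3 hF2' hF3'
  have hdc : d = -c := mul_left_cancel₀ (Complex.ofReal_ne_zero.mpr hB₁.ne')
    (by linear_combination -hF2' + hF2 - hf2)
  rw [hF2, hF3, hdc] at hF3'
  rw [hdc, norm_neg] at hδ
  have bound₁ := norm_le_of_two_mul_eq (p := deriv (deriv (deriv f)) 0) (B₂ := B₂) hB₁.le hγ
    (by linear_combination hf3 + 2 * (deriv (deriv f) 0 + B₁ * c) * hf2)
  have bound₂ := norm_le_of_four_mul_eq (p := deriv (deriv (deriv f)) 0) hB₁.le hγ hδ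
    (by linear_combination hf3 - hF3' + 6 * (deriv (deriv f) 0 + B₁ * c) * hf2)
  rw [norm_div, Complex.norm_ofNat, le_min_iff]
  constructor <;> linarith

theorem stmt9
    (f F : ℂ → ℂ)
    (hf : DifferentiableOn ℂ f (ball 0 1)) (hf0 : f 0 = 0) (hf1 : deriv f 0 = 1)
    (hfi : InjOn f (ball 0 1))
    (hF : DifferentiableOn ℂ F (ball 0 1)) (hF0 : F 0 = 0) (hFi : InjOn F (ball 0 1))
    (hFf : ∀ᶠ z in nhds (0 : ℂ), F (f z) = z)
    (φ : ℂ → ℂ) (B₁ B₂ : ℝ)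
    (hφ : DifferentiableOn ℂ φ (ball 0 1)) (hφ0 : φ 0 = 1)
    (hB₁ : 0 < B₁) (hφ1 : deriv φ 0 = (B₁ : ℂ)) (hφ2 : iteratedDeriv 2 φ 0 = 2 * (B₂ : ℂ))
    (hfsub : Subordinate (fun z => 1 + z * deriv (deriv f) z / deriv f z) φ)
    (hFsub : Subordinate (fun w => 1 + w * deriv (deriv F) w / deriv F w) φ) :
    ‖iteratedDeriv 3 f 0 / 6‖ ≤ min ((B₁ ^ 2 + B₁ + |B₂ - B₁|) / 6) (B₁ * (3 * B₁ + 2) / 12) :=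
  stmt9_general f F hf hf0 hf1 hF hFf φ B₁ B₂ hφ hB₁ hφ1 hφ2 hfsub hFsub
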